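/- For a polyhedral cone C generated by vectors f_i, i ∈ I, and for g defining a valid inequality on C, the face F_g = {x ∈ C : ⟨g, x⟩ = 0} is the conic hull of {f_i : ⟨g, f_i⟩ = 0}. -/
import Mathlib


open Finset

lemma key {J I : Type*} [Fintype J] [Fintype I] (f : I → J → ℝ) (g : J → ℝ) (d : I → ℝ) :
    ∑ j, g j * (∑ i, d i • f i) j = ∑ i, d i * ∑ j, g j * f i j := by
  simp only [Finset.sum_apply, Pi.smul_apply, smul_eq_mul, Finset.mul_sum, Finset.sum_mul]
  rw [Finset.sum_comm]
  congr 1; ext i; congr 1; ext j; ring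

/-- for a polyhedral cone `C` generated by the `f i` and a valid inequality
`g`, the face `F_g = {x ∈ C | ⟨g, x⟩ = 0}` is the conic hull of `{f i : ⟨g, f i⟩ = 0}`. -/
theorem stmt4 {J I : Type*} [Fintype J] [Fintype I]
    (f : I → J → ℝ) (g : J → ℝ)
    (C : Set (J → ℝ))
    (hC : C = {x | ∃ d : I → ℝ, (∀ i, 0 ≤ d i) ∧ x = ∑ i, d i • f i})
    (hvalid : ∀ i, 0 ≤ ∑ j, g j * f i j) :
    {x ∈ C | ∑ j, g j * x j = 0} =
      {x | ∃ d : I → ℝ, (∀ i, 0 ≤ d i) ∧ (∀ i, ∑ j, g j * f i j ≠ 0 → d i = 0) ∧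
        x = ∑ i, d i • f i} := by
  subst hC
  ext x
  constructor
  · rintro ⟨⟨d, hd, rfl⟩, hx0⟩
    refine ⟨d, hd, ?_, rfl⟩
    rw [key] at hx0
    have hterm : ∀ i ∈ Finset.univ, d i * ∑ j, g j * f i j = 0 := by
      apply (Finset.sum_eq_zero_iff_of_nonneg ?_).mp hx0
      intro i _
      exact mul_nonneg (hd i) (hvalid i)
    intro i hi
    have := hterm i (Finset.mem_univ i)
    rcases mul_eq_zero.mp this with h | h
    · exact h
    · exact absurd h hi
  · rintro ⟨d, hd, hz, rfl⟩
    refine ⟨⟨d, hd, rfl⟩, ?_⟩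
    rw [key]
    apply Finset.sum_eq_zero
    intro i _
    by_cases h : ∑ j, g j * f i j = 0
    · rw [h, mul_zero]
    · rw [hz i h, zero_mul]
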